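/- Closed-form cost–capacity trade-off for the binary multiplier channel with power constraint (Example 3): for Γ ∈ [0,1] define C(Γ) := max { (1/2)·h₂((1−Γ)p∗ + Γp₁) : p∗, p₀, p₁ ∈ [0,1] and (1−Γ)p∗ + (Γ/2)(p₀ + p₁) = 1/4 }. Then C(Γ) = (1/2)·h₂((1+2Γ)/4) for Γ ∈ [0, 1/2], and C(Γ) = 1/2 for Γ ∈ [1/2, 1]. -/

import Mathlib

/-!
Closed-form cost–capacity trade-off for the binary multiplier channel with
power constraint (Example 3).
-/

/-- The binary entropy function (base 2), with `h₂ 0 = h₂ 1 = 0`. -/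
noncomputable def binH (p : ℝ) : ℝ :=
  -(p * Real.logb 2 p) - ((1 - p) * Real.logb 2 (1 - p))

/-- The capacity expression of Theorem 1 for the multiplier channel `Y = S·X`
with `S ∼ Bernoulli(1/2)`, binary probing with cost `Λ(a) = a` and budget `Γ`,
under the input power constraint `P(X=1) ≤ 1/4`:
`C(Γ) = max { (1/2)h₂((1−Γ)p∗ + Γp₁) : p∗,p₀,p₁ ∈ [0,1],
(1−Γ)p∗ + (Γ/2)(p₀+p₁) = 1/4 }`. -/
noncomputable def Cmult (Γ : ℝ) : ℝ :=
  sSup {r : ℝ | ∃ pa p₀ p₁ : ℝ,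
    pa ∈ Set.Icc (0 : ℝ) 1 ∧ p₀ ∈ Set.Icc (0 : ℝ) 1 ∧ p₁ ∈ Set.Icc (0 : ℝ) 1 ∧
    (1 - Γ) * pa + (Γ / 2) * (p₀ + p₁) = 1 / 4 ∧
    r = (1 / 2) * binH ((1 - Γ) * pa + Γ * p₁)}

/-!
Every feasible triple has output probability `(1 - Γ) p∗ + Γ p₁ = 1/4 + (Γ/2)(p₁ - p₀)`, which
lies in `[0, 1/4 + Γ/2]`. For `Γ ≤ 1/2` this interval stays below `1/2`, where `h₂` is
increasing, so the optimum is `p₀ = 0`, `p₁ = 1`. For `Γ ≥ 1/2` the output probability `1/2`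
is reachable (`p∗ = p₀ = 0`, `p₁ = 1/(2Γ)`), and `h₂ ≤ 1` everywhere.
-/

open Set

lemma binH_eq_binEntropy_div_log_two (p : ℝ) : binH p = Real.binEntropy p / Real.log 2 := by
  simp only [binH, Real.binEntropy, Real.log_inv, Real.logb]
  ring

lemma binH_le_binH {a b : ℝ} (ha : 0 ≤ a) (hab : a ≤ b) (hb : b ≤ 1 / 2) :
    binH a ≤ binH b := by
  rw [binH_eq_binEntropy_div_log_two, binH_eq_binEntropy_div_log_two]
  gcongr
  exact Real.binEntropy_strictMonoOn.monotoneOn ⟨ha, by linarith⟩ ⟨by linarith, by linarith⟩ hab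

lemma binH_le_one (p : ℝ) : binH p ≤ 1 := by
  rw [binH_eq_binEntropy_div_log_two, div_le_one (Real.log_pos one_lt_two)]
  exact Real.binEntropy_le_log_two

lemma binH_one_half : binH (1 / 2) = 1 := by
  rw [binH_eq_binEntropy_div_log_two, one_div, Real.binEntropy_two_inv]
  exact div_self (Real.log_pos one_lt_two).ne'

lemma Cmult_eq_of_maximizer {Γ pa p₀ p₁ t : ℝ} (hpa : pa ∈ Icc (0 : ℝ) 1) (hp₀ : p₀ ∈ Icc (0 : ℝ) 1)
    (hp₁ : p₁ ∈ Icc (0 : ℝ) 1) (hcost : (1 - Γ) * pa + (Γ / 2) * (p₀ + p₁) = 1 / 4)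
    (ht : (1 - Γ) * pa + Γ * p₁ = t)
    (hmax : ∀ qa q₀ q₁ : ℝ, qa ∈ Icc (0 : ℝ) 1 → q₀ ∈ Icc (0 : ℝ) 1 → q₁ ∈ Icc (0 : ℝ) 1 →
      (1 - Γ) * qa + (Γ / 2) * (q₀ + q₁) = 1 / 4 → binH ((1 - Γ) * qa + Γ * q₁) ≤ binH t) :
    Cmult Γ = (1 / 2) * binH t := by
  refine IsGreatest.csSup_eq ⟨⟨pa, p₀, p₁, hpa, hp₀, hp₁, hcost, by rw [ht]⟩, ?_⟩
  rintro r ⟨qa, q₀, q₁, hqa, hq₀, hq₁, hqcost, rfl⟩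
  linarith [hmax qa q₀ q₁ hqa hq₀ hq₁ hqcost]

lemma output_eq_of_cost_eq {Γ pa p₀ p₁ : ℝ}
    (hcost : (1 - Γ) * pa + (Γ / 2) * (p₀ + p₁) = 1 / 4) :
    (1 - Γ) * pa + Γ * p₁ = 1 / 4 + Γ / 2 * (p₁ - p₀) := by
  linear_combination hcost

lemma Cmult_eq_of_le_half {Γ : ℝ} (hΓ₀ : 0 ≤ Γ) (hΓ : Γ ≤ 1 / 2) :
    Cmult Γ = (1 / 2) * binH ((1 + 2 * Γ) / 4) := by
  have hΓ₁ : 0 < 1 - Γ := by linarith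
  refine Cmult_eq_of_maximizer (pa := (1 / 4 - Γ / 2) / (1 - Γ)) (p₀ := 0) (p₁ := 1)
    ⟨by apply div_nonneg <;> linarith, by rw [div_le_one hΓ₁]; linarith⟩
    (by norm_num) (by norm_num) (by field_simp; ring) (by field_simp; ring) ?_
  intro qa q₀ q₁ ⟨hqa₀, _⟩ ⟨hq₀₀, _⟩ ⟨hq₁₀, hq₁₁⟩ hcost
  have hnonneg : 0 ≤ (1 - Γ) * qa + Γ * q₁ := by positivity
  refine binH_le_binH hnonneg ?_ (by linarith)
  rw [output_eq_of_cost_eq hcost]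
  nlinarith

lemma Cmult_eq_of_half_le {Γ : ℝ} (hΓ : 1 / 2 ≤ Γ) : Cmult Γ = 1 / 2 := by
  have hΓpos : 0 < Γ := by linarith
  have hmax := Cmult_eq_of_maximizer (Γ := Γ) (pa := 0) (p₀ := 0) (p₁ := 1 / (2 * Γ)) (t := 1 / 2)
    (by norm_num) (by norm_num) ⟨by positivity, by rw [div_le_one (by positivity)]; linarith⟩
    (by field_simp; ring) (by field_simp; ring)
    (fun _ _ _ _ _ _ _ => by rw [binH_one_half]; exact binH_le_one _)
  rwa [binH_one_half, mul_one] at hmax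

/-- **Example 3 (binary multiplier channel with power constraint).**
`C(Γ) = (1/2)h₂((1+2Γ)/4)` for `Γ ∈ [0, 1/2]`, and `C(Γ) = 1/2` for
`Γ ∈ [1/2, 1]`. -/
theorem multiplier_channel_tradeoff :
    (∀ Γ : ℝ, 0 ≤ Γ → Γ ≤ 1 / 2 → Cmult Γ = (1 / 2) * binH ((1 + 2 * Γ) / 4)) ∧
    (∀ Γ : ℝ, 1 / 2 ≤ Γ → Γ ≤ 1 → Cmult Γ = 1 / 2) :=
  ⟨fun _ => Cmult_eq_of_le_half, fun _ hΓ _ => Cmult_eq_of_half_le hΓ⟩
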